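/- arXiv:2602.18722 — 2 statements merged into one kernel-verified Lean document; each statement's English description precedes it below -/
import Mathlib

section
/- Let H be a Hilbert space, a: H × H → ℝ a bounded symmetric nonnegative bilinear form, and Q ⊆ H a finite-dimensional subspace such that a is coercive on the orthogonal complement Q⊥ (i.e., a(v,v) ≥ c‖v‖² for all v ∈ Q⊥, some c > 0). Then the saddle point problem: find (v, λ) ∈ H × Q with a(v,q) + ⟨λ, q⟩ = F(q) for all q ∈ H and ⟨v, μ⟩ = 0 for all μ ∈ Q, admits a unique solution for every bounded linear functional F on H. -/
/-!
Lax–Milgram on the closed subspace `Qᗮ` gives `v ∈ Qᗮ` with `a(v, w) = F(w)` for `w ∈ Qᗮ`. The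
residual `F - a(v, ·)` then vanishes on `Qᗮ`, so its Riesz representative lies in `Qᗮᗮ = Q` and is
the multiplier. For uniqueness, testing the homogeneous problem with `q = v` kills the multiplier
term since `v ⊥ Q`, and coercivity forces `v = 0`, after which `⟨λ, ·⟩ = 0` forces `λ = 0`.
-/

open RealInnerProductSpace

theorem exists_continuousLinearMap₂_eq_of_bounded {E F : Type*} [SeminormedAddCommGroup E]
    [NormedSpace ℝ E] [SeminormedAddCommGroup F] [NormedSpace ℝ F] (a : E → F → ℝ)
    (hlin₁ : ∀ (c : ℝ) (u u' : E) (v : F), a (c • u + u') v = c * a u v + a u' v)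
    (hlin₂ : ∀ (c : ℝ) (u : E) (v v' : F), a u (c • v + v') = c * a u v + a u v')
    (hbdd : ∃ C, ∀ u v, |a u v| ≤ C * ‖u‖ * ‖v‖) :
    ∃ B : E →L[ℝ] F →L[ℝ] ℝ, ∀ u v, B u v = a u v := by
  obtain ⟨C, hC⟩ := hbdd
  have zero_left : ∀ v, a 0 v = 0 := fun v => by simpa using hlin₁ 1 0 0 v
  have zero_right : ∀ u, a u 0 = 0 := fun u => by simpa using hlin₂ 1 u 0 0
  let B : E →ₗ[ℝ] F →ₗ[ℝ] ℝ := LinearMap.mk₂ ℝ a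
    (fun u u' v => by simpa using hlin₁ 1 u u' v)
    (fun c u v => by simpa [zero_left] using hlin₁ c u 0 v)
    (fun u v v' => by simpa using hlin₂ 1 u v v')
    (fun c u v => by simpa [zero_right] using hlin₂ c u v 0)
  exact ⟨B.mkContinuous₂ C fun u v => hC u v, fun u v => rfl⟩

section SaddlePoint

variable {H : Type*} [NormedAddCommGroup H] [InnerProductSpace ℝ H]
  {B : H →L[ℝ] H →L[ℝ] ℝ} {Q : Submodule ℝ H}

theorem eq_zero_of_saddlePoint_homogeneous {c : ℝ} (hc : 0 < c)
    (hcoer : ∀ v ∈ Qᗮ, c * ‖v‖ ^ 2 ≤ B v v) {v μ : H} (hμ : μ ∈ Q) (hv : v ∈ Qᗮ)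
    (h : ∀ q, B v q + ⟪μ, q⟫ = 0) : v = 0 ∧ μ = 0 := by
  have hBvv : B v v = 0 := by
    simpa [Submodule.inner_right_of_mem_orthogonal hμ hv] using h v
  have hv0 : v = 0 := by
    by_contra hne
    have := hcoer v hv
    linarith [mul_pos hc (pow_pos (norm_pos_iff.2 hne) 2)]
  subst hv0
  exact ⟨rfl, by simpa using h μ⟩

theorem isCoercive_bilinearComp_orthogonal {c : ℝ} (hc : 0 < c)
    (hcoer : ∀ v ∈ Qᗮ, c * ‖v‖ ^ 2 ≤ B v v) :
    IsCoercive (B.bilinearComp Qᗮ.subtypeL Qᗮ.subtypeL) :=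
  ⟨c, hc, fun u => by simpa [sq, mul_assoc] using hcoer u u.2⟩

theorem exists_mem_orthogonal_forall_apply_eq [CompleteSpace H] {c : ℝ} (hc : 0 < c)
    (hcoer : ∀ v ∈ Qᗮ, c * ‖v‖ ^ 2 ≤ B v v) (F : H →L[ℝ] ℝ) :
    ∃ v ∈ Qᗮ, ∀ w ∈ Qᗮ, B v w = F w := by
  have hB := isCoercive_bilinearComp_orthogonal hc hcoer
  let v : Qᗮ :=
    hB.continuousLinearEquivOfBilin.symm ((InnerProductSpace.toDual ℝ Qᗮ).symm (F.comp Qᗮ.subtypeL))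
  refine ⟨v, v.2, fun w hw => ?_⟩
  simpa [v, InnerProductSpace.toDual_symm_apply] using
    (hB.continuousLinearEquivOfBilin_apply v ⟨w, hw⟩).symm

theorem exists_mem_forall_apply_add_inner_eq [CompleteSpace H] [Q.HasOrthogonalProjection]
    {F : H →L[ℝ] ℝ} {v : H} (hv : ∀ w ∈ Qᗮ, B v w = F w) :
    ∃ μ ∈ Q, ∀ q, B v q + ⟪μ, q⟫ = F q := by
  set μ := (InnerProductSpace.toDual ℝ H).symm (F - B v)
  have hμ : ∀ q, ⟪μ, q⟫ = F q - B v q := fun q => InnerProductSpace.toDual_symm_apply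
  refine ⟨μ, ?_, fun q => by rw [hμ]; ring⟩
  rw [← Q.orthogonal_orthogonal, Submodule.mem_orthogonal]
  intro w hw
  rw [real_inner_comm, hμ, hv w hw, sub_self]

theorem existsUnique_saddlePoint [CompleteSpace H] [Q.HasOrthogonalProjection] {c : ℝ}
    (hc : 0 < c) (hcoer : ∀ v ∈ Qᗮ, c * ‖v‖ ^ 2 ≤ B v v) (F : H →L[ℝ] ℝ) :
    ∃! p : H × Q, (∀ q, B p.1 q + ⟪(p.2 : H), q⟫ = F q) ∧ p.1 ∈ Qᗮ := by
  obtain ⟨v, hvQ, hv⟩ := exists_mem_orthogonal_forall_apply_eq hc hcoer F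
  obtain ⟨μ, hμQ, hμ⟩ := exists_mem_forall_apply_add_inner_eq hv
  refine ⟨(v, ⟨μ, hμQ⟩), ⟨hμ, hvQ⟩, ?_⟩
  rintro ⟨w, κ⟩ ⟨hwκ, hwQ⟩
  have hdiff : ∀ q, B (w - v) q + ⟪(κ : H) - μ, q⟫ = 0 := fun q => by
    rw [map_sub, sub_apply, inner_sub_left]
    linear_combination hwκ q - hμ q
  obtain ⟨hw, hκ⟩ := eq_zero_of_saddlePoint_homogeneous hc hcoer
    (Q.sub_mem κ.2 hμQ) (Qᗮ.sub_mem hwQ hvQ) hdiff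
  exact Prod.ext (sub_eq_zero.1 hw) (Subtype.ext (sub_eq_zero.1 hκ))

end SaddlePoint

theorem stmt8_general {H : Type*} [NormedAddCommGroup H] [InnerProductSpace ℝ H]
    [CompleteSpace H] (a : H → H → ℝ)
    (hlin₁ : ∀ (c : ℝ) (u u' v : H), a (c • u + u') v = c * a u v + a u' v)
    (hlin₂ : ∀ (c : ℝ) (u v v' : H), a u (c • v + v') = c * a u v + a u v')
    (hbdd : ∃ C, ∀ u v, |a u v| ≤ C * ‖u‖ * ‖v‖)
    (Q : Submodule ℝ H) [FiniteDimensional ℝ Q]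
    (hcoer : ∃ c > 0, ∀ v : H, (∀ μ ∈ Q, (inner ℝ v μ : ℝ) = 0) →
      c * ‖v‖ ^ 2 ≤ a v v) :
    ∀ F : H →L[ℝ] ℝ, ∃! p : H × Q,
      (∀ q : H, a p.1 q + (inner ℝ (p.2 : H) q : ℝ) = F q) ∧
      (∀ μ ∈ Q, (inner ℝ p.1 μ : ℝ) = 0) := by
  obtain ⟨B, hB⟩ := exists_continuousLinearMap₂_eq_of_bounded a hlin₁ hlin₂ hbdd
  obtain ⟨c, hc, hcoer⟩ := hcoer
  simp_rw [← hB, ← Submodule.mem_orthogonal'] at hcoer ⊢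
  exact existsUnique_saddlePoint hc hcoer

/-- abstract well-posedness of the saddle point problem with a
finite-dimensional multiplier space. `a` is a bounded symmetric nonnegative
bilinear form on a Hilbert space `H`, coercive on the orthogonal complement of
a finite-dimensional subspace `Q`. Then for every bounded linear functional
`F`, the problem: find `(v, λ) ∈ H × Q` with `a(v,q) + ⟨λ,q⟩ = F(q)` for all
`q ∈ H` and `⟨v,μ⟩ = 0` for all `μ ∈ Q`, has a unique solution. -/
theorem stmt8 {H : Type*} [NormedAddCommGroup H] [InnerProductSpace ℝ H]
    [CompleteSpace H] (a : H → H → ℝ)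
    (hlin₁ : ∀ (c : ℝ) (u u' v : H), a (c • u + u') v = c * a u v + a u' v)
    (hlin₂ : ∀ (c : ℝ) (u v v' : H), a u (c • v + v') = c * a u v + a u v')
    (hsymm : ∀ u v, a u v = a v u)
    (hnonneg : ∀ v, 0 ≤ a v v)
    (hbdd : ∃ C, ∀ u v, |a u v| ≤ C * ‖u‖ * ‖v‖)
    (Q : Submodule ℝ H) [FiniteDimensional ℝ Q]
    (hcoer : ∃ c > 0, ∀ v : H, (∀ μ ∈ Q, (inner ℝ v μ : ℝ) = 0) →
      c * ‖v‖ ^ 2 ≤ a v v) :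
    ∀ F : H →L[ℝ] ℝ, ∃! p : H × Q,
      (∀ q : H, a p.1 q + (inner ℝ (p.2 : H) q : ℝ) = F q) ∧
      (∀ μ ∈ Q, (inner ℝ p.1 μ : ℝ) = 0) :=
  stmt8_general a hlin₁ hlin₂ hbdd Q hcoer
end

section
/- Let A ∈ Matrix (Fin 3) (Fin 3) ℝ be skew-symmetric and let r̂: X → ℝ³ be a function on a measure space (X, μ) with finite measure such that ∫ ((A r̂) × r̂) dμ = 0 and the matrix ∫ (|r̂|² I - r̂ r̂ᵀ) dμ is positive definite. Then A = 0. -/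
open Matrix MeasureTheory

/-- if `A` is a 3×3 skew-symmetric real matrix,
`∫ (A r̂) × r̂ dμ = 0` (componentwise), and the matrix
`∫ (|r̂|² I - r̂ r̂ᵀ) dμ` is positive definite, then `A = 0`. -/
theorem stmt14 {X : Type*} [MeasurableSpace X] (μ : Measure X) [IsFiniteMeasure μ]
    (A : Matrix (Fin 3) (Fin 3) ℝ) (hskew : Aᵀ = -A)
    (r : X → Fin 3 → ℝ)
    (hint : ∀ i j, Integrable (fun x => r x i * r x j) μ)
    (hzero : ∀ i, (∫ x, crossProduct (A.mulVec (r x)) (r x) i ∂μ) = 0)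
    (M : Matrix (Fin 3) (Fin 3) ℝ)
    (hM : ∀ i j, M i j =
      ∫ x, ((r x ⬝ᵥ r x) * (1 : Matrix (Fin 3) (Fin 3) ℝ) i j - r x i * r x j) ∂μ)
    (hMpos : ∀ α : Fin 3 → ℝ, α ≠ 0 → 0 < α ⬝ᵥ M.mulVec α) :
    A = 0 := by
  -- skew facts
  have hA : ∀ i j, A j i = -A i j := by
    intro i j
    have := congrFun (congrFun hskew i) j
    simpa [Matrix.transpose_apply] using this
  have h00 : A 0 0 = 0 := by have := hA 0 0; linarith
  have h11 : A 1 1 = 0 := by have := hA 1 1; linarith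
  have h22 : A 2 2 = 0 := by have := hA 2 2; linarith
  set J : Fin 3 → Fin 3 → ℝ := fun k l => ∫ x, r x k * r x l ∂μ with hJ
  have intsum : ∀ c : Fin 3 → Fin 3 → ℝ,
      (∫ x, ∑ k, ∑ l, c k l * (r x k * r x l) ∂μ) = ∑ k, ∑ l, c k l * J k l := by
    intro c
    rw [integral_finset_sum _ (fun k _ =>
      integrable_finset_sum _ (fun l _ => (hint k l).const_mul (c k l)))]
    refine Finset.sum_congr rfl fun k _ => ?_
    rw [integral_finset_sum _ (fun l _ => (hint k l).const_mul (c k l))]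
    exact Finset.sum_congr rfl fun l _ => integral_const_mul _ _
  -- cross product integrals in terms of J
  have ecross : ∀ i : Fin 3, ∃ c : Fin 3 → Fin 3 → ℝ,
      True := fun i => ⟨0, trivial⟩
  have e0 : A 1 0 * J 0 2 + A 1 1 * J 1 2 + A 1 2 * J 2 2
      - A 2 0 * J 0 1 - A 2 1 * J 1 1 - A 2 2 * J 2 1 = 0 := by
    have h := hzero 0
    have hrw : (fun x => crossProduct (A.mulVec (r x)) (r x) 0)
        = fun x => ∑ k, ∑ l,
          (![![0, -A 2 0, A 1 0], ![0, -A 2 1, A 1 1], ![0, -A 2 2, A 1 2]] k l)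
            * (r x k * r x l) := by
      funext x
      simp [cross_apply, Matrix.mulVec, dotProduct, Fin.sum_univ_three]
      ring
    rw [hrw, intsum] at h
    simp [Fin.sum_univ_three] at h
    linarith
  have e1 : A 2 0 * J 0 0 + A 2 1 * J 1 0 + A 2 2 * J 2 0
      - A 0 0 * J 0 2 - A 0 1 * J 1 2 - A 0 2 * J 2 2 = 0 := by
    have h := hzero 1
    have hrw : (fun x => crossProduct (A.mulVec (r x)) (r x) 1)
        = fun x => ∑ k, ∑ l,
          (![![A 2 0, 0, -A 0 0], ![A 2 1, 0, -A 0 1], ![A 2 2, 0, -A 0 2]] k l)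
            * (r x k * r x l) := by
      funext x
      simp [cross_apply, Matrix.mulVec, dotProduct, Fin.sum_univ_three]
      ring
    rw [hrw, intsum] at h
    simp [Fin.sum_univ_three] at h
    linarith
  have e2 : A 0 0 * J 0 1 + A 0 1 * J 1 1 + A 0 2 * J 2 1
      - A 1 0 * J 0 0 - A 1 1 * J 1 0 - A 1 2 * J 2 0 = 0 := by
    have h := hzero 2
    have hrw : (fun x => crossProduct (A.mulVec (r x)) (r x) 2)
        = fun x => ∑ k, ∑ l,
          (![![-A 1 0, A 0 0, 0], ![-A 1 1, A 0 1, 0], ![-A 1 2, A 0 2, 0]] k l)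
            * (r x k * r x l) := by
      funext x
      simp [cross_apply, Matrix.mulVec, dotProduct, Fin.sum_univ_three]
      ring
    rw [hrw, intsum] at h
    simp [Fin.sum_univ_three] at h
    linarith
  -- J is symmetric
  have hJsymm : ∀ k l, J k l = J l k := by
    intro k l
    simp only [hJ]
    exact integral_congr_ae (Filter.Eventually.of_forall fun x => mul_comm _ _)
  -- M in terms of J
  have hM' : ∀ i j, M i j = (1 : Matrix (Fin 3) (Fin 3) ℝ) i j * (J 0 0 + J 1 1 + J 2 2) - J i j := by
    intro i j
    rw [hM i j]
    have hrw : (fun x => (r x ⬝ᵥ r x) * (1 : Matrix (Fin 3) (Fin 3) ℝ) i j - r x i * r x j)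
        = fun x => ∑ k, ∑ l,
          ((fun k l => (if k = l then (1 : Matrix (Fin 3) (Fin 3) ℝ) i j else 0)
            - (if k = i ∧ l = j then 1 else 0)) k l) * (r x k * r x l) := by
      funext x
      fin_cases i <;> fin_cases j <;>
        simp [dotProduct, Fin.sum_univ_three] <;> ring
    rw [hrw, intsum]
    fin_cases i <;> fin_cases j <;> simp [Fin.sum_univ_three] <;> ring
  -- the axis vector
  set η : Fin 3 → ℝ := ![A 2 1, A 0 2, A 1 0] with hη
  have hMη : M.mulVec η = 0 := by
    funext i
    have hA01 : A 0 1 = -A 1 0 := by have := hA 1 0; linarith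
    have hA20 : A 2 0 = -A 0 2 := by have := hA 0 2; linarith
    have hA12 : A 1 2 = -A 2 1 := by have := hA 2 1; linarith
    fin_cases i <;>
      · simp only [Matrix.mulVec, dotProduct, Fin.sum_univ_three, hη, Pi.zero_apply]
        simp only [hM']
        simp [hA01, hA20, hA12, h00, h11, h22, hJsymm 1 0, hJsymm 2 0, hJsymm 2 1, Matrix.one_apply, Fin.zero_eta, Fin.mk_one] at e0 e1 e2 ⊢
        linarith [e0, e1, e2]
  have hη0 : η = 0 := by
    by_contra hne
    have := hMpos η hne
    rw [hMη] at this
    simp [dotProduct] at this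
  have hA21 : A 2 1 = 0 := by have := congrFun hη0 0; simpa [hη] using this
  have hA02 : A 0 2 = 0 := by have := congrFun hη0 1; simpa [hη] using this
  have hA10 : A 1 0 = 0 := by have := congrFun hη0 2; simpa [hη] using this
  ext i j
  fin_cases i <;> fin_cases j <;>
    simp [h00, h11, h22, hA21, hA02, hA10, hA 1 0, hA 0 2, hA 2 1]
end
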